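/- arXiv:1404.2178 — 2 statements merged into one kernel-verified Lean document; each statement's English description precedes it below -/
import Mathlib

section
/- There exists a strictly increasing limit computable function f : ℕ → ℕ with f(0) = 0 such that, setting q_n = 2^{f(n+1) − f(n)} and Q = (q_n)_{n∈ℕ}, for every total computable function α : ℕ → Bool that does not end in an infinite string of 1's, the sequence a_n = |{p ≤ n : frac(q_0 · q_1 · … · q_{p−1} · x_α) ∈ [0, 1/2]}| / n does not converge to 1/2 as n → ∞ (either the limit fails to exist or it differs from 1/2), where x_α = Σ_{n∈ℕ} α(n)·2^{−(n+1)}. -/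
/-!
The sequence `f` is built in stages. Stage `t` is devoted to the program with index
`t.unpair.1`, so every program gets infinitely many stages: if the current list of values has
length `L` and entries bounded by `B`, stage `t` appends the first `2L + 2` arguments above `B`
on which that program is seen to output `0`, or just `B + 1` when no such arguments are found.
Whether they are found depends on a search bound `s`, but the block chosen is monotone in `s`,
so the construction stabilises and `f` is limit computable.

If `α` is computable with infinitely many zeros, every stage devoted to a program for `α`
succeeds, so `α (f p) = false` for `L ≤ p ≤ 3L + 1`. Since `q₀ ⋯ q_{p-1} = 2 ^ f p` and the
binary digits of `2 ^ f p * x_α` after the point begin with `α (f p)`, the orbit lies in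
`[0, 1/2]` for all these `p`, and the frequency at `n = 3L + 1` is at least `2/3`.
-/

open scoped Classical

/-- The real with binary expansion `α`. -/
noncomputable def binVal (α : ℕ → Bool) : ℝ :=
  ∑' n : ℕ, (if α n then (1 : ℝ) else 0) / 2 ^ (n + 1)

lemma summable_binVal (α : ℕ → Bool) :
    Summable fun n => (if α n then (1 : ℝ) else 0) / 2 ^ (n + 1) := by
  refine .of_nonneg_of_le (fun n => by positivity) (fun n => ?_) (summable_geometric_two' 1)
  rw [pow_succ, ← div_div, div_right_comm]
  gcongr
  split <;> norm_num

lemma binVal_nonneg (α : ℕ → Bool) : 0 ≤ binVal α :=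
  tsum_nonneg fun n => by positivity

lemma binVal_le_one (α : ℕ → Bool) : binVal α ≤ 1 := by
  refine ((summable_binVal α).tsum_le_tsum (fun n => ?_) (summable_geometric_two' 1)).trans_eq
    (tsum_geometric_two' 1)
  rw [pow_succ, ← div_div, div_right_comm]
  gcongr
  split <;> norm_num

lemma binVal_eq_half (α : ℕ → Bool) :
    binVal α = ((if α 0 then 1 else 0) + binVal fun n => α (n + 1)) / 2 := by
  rw [binVal, (summable_binVal α).tsum_eq_zero_add, add_div, binVal, ← tsum_div_const]
  congr 1
  · norm_num
  · exact tsum_congr fun n => by rw [pow_succ, div_div]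

lemma binVal_le_half_of_head_false {α : ℕ → Bool} (h : α 0 = false) : binVal α ≤ 1 / 2 := by
  rw [binVal_eq_half, h, if_neg Bool.false_ne_true]
  linarith [binVal_le_one fun n => α (n + 1)]

lemma exists_two_pow_mul_binVal_eq (α : ℕ → Bool) (m : ℕ) :
    ∃ z : ℤ, 2 ^ m * binVal α = z + binVal fun n => α (n + m) := by
  induction m with
  | zero => exact ⟨0, by simp⟩
  | succ m ih =>
    obtain ⟨z, hz⟩ := ih
    refine ⟨2 * z + if α m then 1 else 0, ?_⟩
    have hshift := binVal_eq_half fun n => α (n + m)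
    simp only [zero_add, Nat.add_right_comm _ 1 m, add_assoc] at hshift
    rw [pow_succ', mul_assoc, hz, hshift]
    split <;> push_cast <;> ring

lemma fract_two_pow_mul_binVal_mem_Icc {α : ℕ → Bool} {m : ℕ} (h : α m = false) :
    Int.fract (2 ^ m * binVal α) ∈ Set.Icc (0 : ℝ) (1 / 2) := by
  obtain ⟨z, hz⟩ := exists_two_pow_mul_binVal_eq α m
  have hle : binVal (fun n => α (n + m)) ≤ 1 / 2 :=
    binVal_le_half_of_head_false (by simpa using h)
  rw [hz, Int.fract_intCast_add, Int.fract_eq_self.2 ⟨binVal_nonneg _, by linarith⟩]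
  exact ⟨binVal_nonneg _, hle⟩

lemma Finset.prod_range_pow_sub {M : Type*} [CommMonoid M] (a : M) {f : ℕ → ℕ}
    (hf : Monotone f) (n : ℕ) :
    ∏ i ∈ Finset.range n, a ^ (f (i + 1) - f i) = a ^ (f n - f 0) := by
  rw [Finset.prod_pow_eq_pow_sum, Finset.sum_range_tsub hf]

lemma two_thirds_le_card_filter_Iic_div {P : ℕ → Prop} [DecidablePred P] (L : ℕ)
    (h : ∀ p, L ≤ p → p ≤ 3 * L + 1 → P p) :
    (2 / 3 : ℝ) ≤ ((Finset.Iic (3 * L + 1)).filter P).card / ((3 * L + 1 : ℕ) : ℝ) := by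
  have hsub : Finset.Icc L (3 * L + 1) ⊆ (Finset.Iic (3 * L + 1)).filter P := fun p hp => by
    rw [Finset.mem_Icc] at hp
    exact Finset.mem_filter.2 ⟨Finset.mem_Iic.2 hp.2, h p hp.1 hp.2⟩
  have hcard : 2 * L + 2 ≤ ((Finset.Iic (3 * L + 1)).filter P).card := by
    simpa [Nat.card_Icc, show 3 * L + 1 + 1 - L = 2 * L + 2 by omega] using
      Finset.card_le_card hsub
  rw [le_div_iff₀ (by positivity)]
  have : ((2 * L + 2 : ℕ) : ℝ) ≤ ((Finset.Iic (3 * L + 1)).filter P).card := by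
    exact_mod_cast hcard
  push_cast at this ⊢
  linarith

open Filter Topology Nat.Partrec Code

lemma Filter.Frequently.not_tendsto_nhds_of_lt {ι α : Type*} [LinearOrder α] [TopologicalSpace α]
    [OrderTopology α] {l : Filter ι} {a : ι → α} {b c : α} (h : ∃ᶠ i in l, b ≤ a i) (hcb : c < b) :
    ¬ Tendsto a l (𝓝 c) := fun hlim => by
  obtain ⟨i, hb, hc⟩ := (h.and_eventually (hlim.eventually (gt_mem_nhds hcb))).exists
  exact absurd hb (not_le.2 hc)

lemma Computable.exists_code_zero_mem_eval_iff {α : ℕ → Bool} (hα : Computable α) :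
    ∃ c : Code, ∀ m, 0 ∈ eval c m ↔ α m = false := by
  obtain ⟨c, hc⟩ := exists_code.1 (Partrec.nat_iff.1 (Computable.encode.comp hα).partrec)
  exact ⟨c, fun m => by rw [hc]; cases h : α m <;> simp [h]⟩

lemma List.range_prefix_of_le {m n : ℕ} (h : m ≤ n) : List.range m <+: List.range n := by
  obtain ⟨d, rfl⟩ := Nat.exists_eq_add_of_le h
  rw [List.range_add]
  exact List.prefix_append _ _

lemma List.getD_eq_of_prefix {α : Type*} {l₁ l₂ : List α} (h : l₁ <+: l₂) {p : ℕ}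
    (hp : p < l₁.length) (d : α) : l₂.getD p d = l₁.getD p d := by
  obtain ⟨r, rfl⟩ := h
  exact List.getD_append _ _ _ _ hp

lemma Primrec.list_sum_nat : Primrec (List.sum : List ℕ → ℕ) :=
  (Primrec.list_foldr Primrec.id (Primrec.const 0)
    (Primrec.nat_add.comp (Primrec.fst.comp Primrec.snd) (Primrec.snd.comp Primrec.snd)).to₂).of_eq
    fun _ => rfl

namespace ZeroBlockSequence

section FirstSome

variable {β : Type*} {h : ℕ → Option β} {s s' : ℕ} {b : β}

def firstSome (h : ℕ → Option β) (s : ℕ) : Option β :=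
  ((List.range (s + 1)).filterMap h).head?

lemma exists_eq_some_of_firstSome_eq_some (hb : firstSome h s = some b) : ∃ s', h s' = some b := by
  obtain ⟨s', -, hs'⟩ := List.mem_filterMap.1 (List.mem_of_mem_head? hb)
  exact ⟨s', hs'⟩

lemma firstSome_eq_some_of_le (hb : firstSome h s = some b) (hs : s ≤ s') :
    firstSome h s' = some b := by
  obtain ⟨r, hr⟩ := (List.range_prefix_of_le (Nat.succ_le_succ hs)).filterMap h
  rw [firstSome, ← hr, List.head?_append]
  rw [firstSome] at hb
  rw [hb, Option.some_or]

lemma isSome_firstSome_of_le (hs : (h s).isSome) (hss' : s ≤ s') : (firstSome h s').isSome := by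
  obtain ⟨b, hb⟩ := Option.isSome_iff_exists.1 hs
  refine List.isSome_head?.2 (List.ne_nil_of_mem (a := b) ?_)
  exact List.mem_filterMap.2 ⟨s, List.mem_range.2 (by omega), hb⟩

lemma exists_eventually_firstSome_eq (h : ℕ → Option β) :
    ∃ o, ∀ᶠ s in atTop, firstSome h s = o := by
  by_cases hex : ∃ s₀, (firstSome h s₀).isSome
  · obtain ⟨s₀, hs₀⟩ := hex
    obtain ⟨b, hb⟩ := Option.isSome_iff_exists.1 hs₀
    exact ⟨some b, eventually_atTop.2 ⟨s₀, fun s hs => firstSome_eq_some_of_le hb hs⟩⟩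
  · push Not at hex
    exact ⟨none, Eventually.of_forall fun s => by simpa using hex s⟩

lemma primrec_firstSome {α : Type*} [Primcodable α] [Primcodable β] {h : α → ℕ → Option β}
    {s : α → ℕ} (hh : Primrec₂ h) (hs : Primrec s) : Primrec fun a => firstSome (h a) (s a) :=
  Primrec.list_head?.comp
    (Primrec.listFilterMap (Primrec.list_range.comp (Primrec.succ.comp hs)) hh)

end FirstSome

def zerosAbove (c : Code) (b s : ℕ) : List ℕ :=
  (List.range (s + 1)).filter fun m => decide (b < m ∧ evaln s c m = some 0)

def zeroBlock (c : Code) (b k s : ℕ) : Option (List ℕ) :=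
  if k ≤ (zerosAbove c b s).length then some ((zerosAbove c b s).take k) else none

lemma mem_zerosAbove {c : Code} {b s m : ℕ} :
    m ∈ zerosAbove c b s ↔ m ≤ s ∧ b < m ∧ evaln s c m = some 0 := by
  simp [zerosAbove]

lemma zeroBlock_spec {c : Code} {b k s : ℕ} {bl : List ℕ} (h : zeroBlock c b k s = some bl) :
    bl.length = k ∧ bl.Pairwise (· < ·) ∧ ∀ m ∈ bl, b < m ∧ 0 ∈ eval c m := by
  unfold zeroBlock at h
  split_ifs at h with hk
  cases h
  have hsub : ((zerosAbove c b s).take k).Sublist (List.range (s + 1)) :=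
    (List.take_sublist _ _).trans List.filter_sublist
  refine ⟨by simpa using hk, List.pairwise_lt_range.sublist hsub, fun m hm => ?_⟩
  have hm' := mem_zerosAbove.1 ((List.take_sublist _ _).mem hm)
  exact ⟨hm'.2.1, evaln_sound hm'.2.2⟩

/-- `l.sum` bounds the entries of `l`, so `extend` keeps lists strictly increasing. Taking the
block found at the least stage `s' ≤ s` makes it independent of `s` once it exists. -/
def extend (s t : ℕ) (l : List ℕ) : List ℕ :=
  l ++ (firstSome (zeroBlock (Denumerable.ofNat Code t.unpair.1) l.sum (2 * l.length + 2)) s).getD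
    [l.sum + 1]

lemma exists_extend_eq_append (s t : ℕ) (l : List ℕ) :
    ∃ bl, extend s t l = l ++ bl ∧ bl ≠ [] ∧ bl.Pairwise (· < ·) ∧ ∀ m ∈ bl, l.sum < m := by
  rcases hfs : firstSome (zeroBlock (Denumerable.ofNat Code t.unpair.1) l.sum
    (2 * l.length + 2)) s with _ | bl
  · exact ⟨[l.sum + 1], by rw [extend, hfs]; rfl, by simp, by simp, by simp⟩
  · obtain ⟨s', hs'⟩ := exists_eq_some_of_firstSome_eq_some hfs
    obtain ⟨hlen, hsorted, hgt⟩ := zeroBlock_spec hs'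
    refine ⟨bl, by rw [extend, hfs]; rfl, ?_, hsorted, fun m hm => (hgt m hm).1⟩
    rw [← List.length_pos_iff, hlen]
    omega

lemma pairwise_extend {s t : ℕ} {l : List ℕ} (hl : l.Pairwise (· < ·)) :
    (extend s t l).Pairwise (· < ·) := by
  obtain ⟨bl, heq, -, hbl, hgt⟩ := exists_extend_eq_append s t l
  rw [heq, List.pairwise_append]
  exact ⟨hl, hbl, fun x hx y hy => (List.le_sum_of_mem hx).trans_lt (hgt y hy)⟩

lemma exists_eventually_extend_eq (t : ℕ) (l : List ℕ) :
    ∃ l', ∀ᶠ s in atTop, extend s t l = l' := by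
  obtain ⟨o, ho⟩ := exists_eventually_firstSome_eq
    (zeroBlock (Denumerable.ofNat Code t.unpair.1) l.sum (2 * l.length + 2))
  exact ⟨_, ho.mono fun s hs => by rw [extend, hs]⟩

def IsRun (u : ℕ → List ℕ) : Prop :=
  u 0 = [0] ∧ ∀ t, ∃ s, u (t + 1) = extend s t (u t)

namespace IsRun

variable {u : ℕ → List ℕ}

lemma prefix_of_le (hu : IsRun u) {t t' : ℕ} (h : t ≤ t') : u t <+: u t' := by
  induction t', h using Nat.le_induction with
  | base => exact List.prefix_refl _
  | succ t' _ ih =>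
    obtain ⟨s, hs⟩ := hu.2 t'
    obtain ⟨bl, heq, -⟩ := exists_extend_eq_append s t' (u t')
    rw [hs, heq]
    exact ih.trans (List.prefix_append _ _)

lemma lt_length (hu : IsRun u) (t : ℕ) : t < (u t).length := by
  induction t with
  | zero => simp [hu.1]
  | succ t ih =>
    obtain ⟨s, hs⟩ := hu.2 t
    obtain ⟨bl, heq, hne, -⟩ := exists_extend_eq_append s t (u t)
    rw [hs, heq, List.length_append]
    have := List.length_pos_iff.2 hne
    omega

lemma pairwise (hu : IsRun u) (t : ℕ) : (u t).Pairwise (· < ·) := by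
  induction t with
  | zero => simp [hu.1]
  | succ t ih =>
    obtain ⟨s, hs⟩ := hu.2 t
    rw [hs]
    exact pairwise_extend ih

lemma getD_eq (hu : IsRun u) {t t' p : ℕ} (ht : p < (u t).length) (ht' : p < (u t').length) :
    (u t).getD p 0 = (u t').getD p 0 := by
  rcases le_total t t' with h | h
  · exact (List.getD_eq_of_prefix (hu.prefix_of_le h) ht 0).symm
  · exact List.getD_eq_of_prefix (hu.prefix_of_le h) ht' 0

end IsRun

def run (s : ℕ) : ℕ → List ℕ
  | 0 => [0]
  | t + 1 => extend s t (run s t)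

lemma isRun_run (s : ℕ) : IsRun (run s) :=
  ⟨rfl, fun _ => ⟨s, rfl⟩⟩

noncomputable def limExtend (t : ℕ) (l : List ℕ) : List ℕ :=
  (exists_eventually_extend_eq t l).choose

lemma eventually_extend_eq_limExtend (t : ℕ) (l : List ℕ) :
    ∀ᶠ s in atTop, extend s t l = limExtend t l :=
  (exists_eventually_extend_eq t l).choose_spec

noncomputable def limRun : ℕ → List ℕ
  | 0 => [0]
  | t + 1 => limExtend t (limRun t)

lemma isRun_limRun : IsRun limRun :=
  ⟨rfl, fun t => ((eventually_extend_eq_limExtend t (limRun t)).exists).imp fun _ h => h.symm⟩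

lemma eventually_run_eq_limRun (t : ℕ) : ∀ᶠ s in atTop, run s t = limRun t := by
  induction t with
  | zero => exact Eventually.of_forall fun _ => rfl
  | succ t ih =>
    filter_upwards [ih, eventually_extend_eq_limExtend t (limRun t)] with s hs hext
    rw [run, hs, hext, limRun]

noncomputable def seq (p : ℕ) : ℕ := (limRun (p + 1)).getD p 0

def approx (s p : ℕ) : ℕ := (run s s).getD p 0

lemma seq_eq_getD {t p : ℕ} (h : p < (limRun t).length) : seq p = (limRun t).getD p 0 :=
  isRun_limRun.getD_eq (by have := isRun_limRun.lt_length (p + 1); omega) h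

lemma seq_zero : seq 0 = 0 :=
  seq_eq_getD (t := 0) (by simp [limRun])

lemma strictMono_seq : StrictMono seq := by
  intro p q hpq
  have hq := isRun_limRun.lt_length (q + 1)
  rw [seq_eq_getD (t := q + 1) (by omega), seq_eq_getD (t := q + 1) (by omega),
    List.getD_eq_getElem _ _ (by omega), List.getD_eq_getElem _ _ (by omega)]
  exact List.pairwise_iff_getElem.1 (isRun_limRun.pairwise (q + 1)) _ _ _ _ hpq

lemma eventually_approx_eq (p : ℕ) : ∀ᶠ s in atTop, approx s p = seq p := by
  filter_upwards [eventually_run_eq_limRun (p + 1), eventually_ge_atTop (p + 1)] with s hs hps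
  have hp := isRun_limRun.lt_length (p + 1)
  have hs' := (isRun_run s).lt_length s
  rw [approx, seq, ← hs, (isRun_run s).getD_eq (t' := p + 1) (by omega) (by rw [hs]; omega)]

lemma primrec_zerosAbove : Primrec fun x : Code × ℕ × ℕ => zerosAbove x.1 x.2.1 x.2.2 := by
  have hR : PrimrecRel fun (m : ℕ) (x : Code × ℕ × ℕ) => x.2.1 < m ∧ evaln x.2.2 x.1 m = some 0 :=
    (Primrec.nat_lt.comp (Primrec.fst.comp (Primrec.snd.comp Primrec.snd)) Primrec.fst).and
      (Primrec.eq.comp (primrec_evaln.comp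
        (((Primrec.snd.comp (Primrec.snd.comp Primrec.snd)).pair
          (Primrec.fst.comp Primrec.snd)).pair Primrec.fst)) (Primrec.const (some 0)))
  exact (PrimrecRel.listFilter hR).comp
    (Primrec.list_range.comp (Primrec.succ.comp (Primrec.snd.comp Primrec.snd))) Primrec.id

lemma primrec_zeroBlock :
    Primrec fun x : Code × ℕ × ℕ × ℕ => zeroBlock x.1 x.2.1 x.2.2.1 x.2.2.2 := by
  have hz : Primrec fun x : Code × ℕ × ℕ × ℕ => zerosAbove x.1 x.2.1 x.2.2.2 :=
    primrec_zerosAbove.comp (Primrec.fst.pair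
      ((Primrec.fst.comp Primrec.snd).pair (Primrec.snd.comp (Primrec.snd.comp Primrec.snd))))
  have hk : Primrec fun x : Code × ℕ × ℕ × ℕ => x.2.2.1 :=
    Primrec.fst.comp (Primrec.snd.comp Primrec.snd)
  exact Primrec.ite (Primrec.nat_le.comp hk (Primrec.list_length.comp hz))
    (Primrec.option_some.comp (Primrec.list_take.comp hk hz)) (Primrec.const none)

lemma primrec_extend : Primrec fun x : (ℕ × ℕ) × List ℕ => extend x.1.1 x.1.2 x.2 := by
  have hsum : Primrec fun x : (ℕ × ℕ) × List ℕ => x.2.sum := Primrec.list_sum_nat.comp Primrec.snd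
  have hblock : Primrec₂ fun (x : (ℕ × ℕ) × List ℕ) (s' : ℕ) =>
      zeroBlock (Denumerable.ofNat Code x.1.2.unpair.1) x.2.sum (2 * x.2.length + 2) s' :=
    primrec_zeroBlock.comp
      (((Primrec.ofNat Code).comp (Primrec.fst.comp (Primrec.unpair.comp
        (Primrec.snd.comp (Primrec.fst.comp Primrec.fst))))).pair
      ((hsum.comp Primrec.fst).pair
        ((Primrec.nat_add.comp (Primrec.nat_mul.comp (Primrec.const 2)
          (Primrec.list_length.comp (Primrec.snd.comp Primrec.fst))) (Primrec.const 2)).pair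
          Primrec.snd)))
  exact Primrec.list_append.comp Primrec.snd
    (Primrec.option_getD.comp (primrec_firstSome hblock (Primrec.fst.comp Primrec.fst))
      (Primrec.list_cons.comp (Primrec.succ.comp hsum) (Primrec.const [])))

lemma primrec_run : Primrec₂ run :=
  (Primrec.nat_rec (Primrec.const [0])
    (primrec_extend.comp ((Primrec.fst.pair (Primrec.fst.comp Primrec.snd)).pair
      (Primrec.snd.comp Primrec.snd))).to₂).of_eq fun s t => by
    induction t with
    | zero => rfl
    | succ t ih => simp only [run, ← ih]

lemma computable_approx : Computable₂ approx :=
  ((Primrec.list_getD 0).comp (primrec_run.comp Primrec.fst Primrec.fst) Primrec.snd).to_comp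

variable {c : Code} {α : ℕ → Bool}

lemma exists_le_length_zerosAbove (hc : ∀ m, 0 ∈ eval c m ↔ α m = false)
    (hinf : ∀ m, ∃ k, m ≤ k ∧ α k = false) (b k : ℕ) :
    ∃ s, k ≤ (zerosAbove c b s).length := by
  have hfreq : ∃ᶠ m in atTop, α m = false ∧ b < m :=
    (frequently_atTop.2 hinf).and_eventually (eventually_gt_atTop b)
  obtain ⟨T, hT, hcard⟩ := (Nat.frequently_atTop_iff_infinite.1 hfreq).exists_subset_card_eq k
  have hev : ∀ m ∈ T, ∀ᶠ s in atTop, m ∈ zerosAbove c b s := fun m hm => by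
    obtain ⟨hαm, hbm⟩ := hT hm
    obtain ⟨s₀, hs₀⟩ := evaln_complete.1 ((hc m).2 hαm)
    filter_upwards [eventually_ge_atTop (max s₀ m)] with s hs
    exact mem_zerosAbove.2 ⟨le_of_max_le_right hs, hbm, evaln_mono (le_of_max_le_left hs) hs₀⟩
  obtain ⟨s, hs⟩ := ((eventually_all_finset T).2 hev).exists
  refine ⟨s, hcard ▸ ?_⟩
  calc T.card ≤ (zerosAbove c b s).toFinset.card :=
        Finset.card_le_card fun m hm => List.mem_toFinset.2 (hs m hm)
    _ ≤ (zerosAbove c b s).length := List.toFinset_card_le _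

lemma exists_limExtend_eq_append (hc : ∀ m, 0 ∈ eval c m ↔ α m = false)
    (hinf : ∀ m, ∃ k, m ≤ k ∧ α k = false) {t : ℕ} (ht : Denumerable.ofNat Code t.unpair.1 = c)
    (l : List ℕ) :
    ∃ bl, limExtend t l = l ++ bl ∧ bl.length = 2 * l.length + 2 ∧ ∀ m ∈ bl, α m = false := by
  obtain ⟨s₀, hs₀⟩ := exists_le_length_zerosAbove hc hinf l.sum (2 * l.length + 2)
  have hsome : (zeroBlock c l.sum (2 * l.length + 2) s₀).isSome := by simp [zeroBlock, hs₀]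
  obtain ⟨s, hs, hext⟩ := ((eventually_ge_atTop s₀).and (eventually_extend_eq_limExtend t l)).exists
  obtain ⟨bl, hbl⟩ := Option.isSome_iff_exists.1 (isSome_firstSome_of_le hsome hs)
  obtain ⟨s', hs'⟩ := exists_eq_some_of_firstSome_eq_some hbl
  obtain ⟨hlen, -, hmem⟩ := zeroBlock_spec hs'
  refine ⟨bl, ?_, hlen, fun m hm => (hc m).1 (hmem m hm).2⟩
  rw [← hext, extend, ht, hbl]
  rfl

lemma exists_seq_block (hc : ∀ m, 0 ∈ eval c m ↔ α m = false)
    (hinf : ∀ m, ∃ k, m ≤ k ∧ α k = false) (N : ℕ) :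
    ∃ L, N ≤ L ∧ ∀ p, L ≤ p → p ≤ 3 * L + 1 → α (seq p) = false := by
  set t := Nat.pair (Encodable.encode c) N
  obtain ⟨bl, hbl, hlen, hfalse⟩ :=
    exists_limExtend_eq_append hc hinf (t := t) (by simp [t]) (limRun t)
  have ht := isRun_limRun.lt_length t
  refine ⟨(limRun t).length, (Nat.right_le_pair _ _).trans ht.le, fun p hp hp' => hfalse _ ?_⟩
  have hbl' : limRun (t + 1) = limRun t ++ bl := hbl
  rw [seq_eq_getD (t := t + 1) (by rw [hbl', List.length_append]; omega), hbl',
    List.getD_append_right _ _ _ _ hp, List.getD_eq_getElem _ _ (by omega)]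
  exact List.getElem_mem _

end ZeroBlockSequence

open ZeroBlockSequence

theorem frequency_fails_to_converge_to_half :
    ∃ f : ℕ → ℕ,
      StrictMono f ∧ f 0 = 0 ∧
      (∃ g : ℕ → ℕ → ℕ, Computable₂ g ∧ ∀ p, ∃ N, ∀ s, N ≤ s → g s p = f p) ∧
      ∀ α : ℕ → Bool, Computable α → (∀ m, ∃ k, m ≤ k ∧ α k = false) →
        ¬ Filter.Tendsto
            (fun n => (((Finset.Iic n).filter (fun p =>
              Int.fract ((∏ i ∈ Finset.range p,
                ((2 : ℝ) ^ (f (i + 1) - f i))) * binVal α)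
                ∈ Set.Icc (0 : ℝ) (1 / 2))).card : ℝ) / (n : ℝ))
            Filter.atTop (nhds (1 / 2)) := by
  refine ⟨seq, strictMono_seq, seq_zero,
    ⟨approx, computable_approx, fun p => eventually_atTop.1 (eventually_approx_eq p)⟩, ?_⟩
  intro α hα hinf
  obtain ⟨c, hc⟩ := hα.exists_code_zero_mem_eval_iff
  refine Frequently.not_tendsto_nhds_of_lt (frequently_atTop.2 fun N => ?_)
    (by norm_num : (1 / 2 : ℝ) < 2 / 3)
  obtain ⟨L, hNL, hL⟩ := exists_seq_block hc hinf N
  refine ⟨3 * L + 1, by omega, two_thirds_le_card_filter_Iic_div L fun p hp hp' => ?_⟩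
  rw [Finset.prod_range_pow_sub _ strictMono_seq.monotone, seq_zero, Nat.sub_zero]
  exact fract_two_pow_mul_binVal_mem_Icc (hL p hp hp')
end

section
/- For every countable family (α_e)_{e∈ℕ} of binary sequences α_e : ℕ → Bool, none of which ends in an infinite string of 1's, there exists a strictly increasing function f : ℕ → ℕ with f(0) = 0 and f(3^{t+1} − 1) ≤ 2·(3^{t+1} − 1) for all t, such that, setting q_n = 2^{f(n+1) − f(n)} and Q = (q_n)_{n∈ℕ}, no real x_{α_e} = Σ_{n∈ℕ} α_e(n)·2^{−(n+1)} is Q-distribution-normal. -/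
open scoped Classical

/-- A sequence of reals is uniformly distributed modulo 1. -/
def UnifDistMod1 (y : ℕ → ℝ) : Prop :=
  ∀ a b : ℝ, 0 ≤ a → a ≤ b → b ≤ 1 →
    Filter.Tendsto
      (fun n => (((Finset.range n).filter
        (fun k => Int.fract (y k) ∈ Set.Icc a b)).card : ℝ) / (n : ℝ))
      Filter.atTop (nhds (b - a))

/-- `x` is distribution normal with respect to the basic sequence `Q`. -/
def QDistNormal (Q : ℕ → ℕ) (x : ℝ) : Prop :=
  UnifDistMod1 (fun k => (∏ i ∈ Finset.range k, (Q i : ℝ)) * x)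

/-!
Take `f` with steps `1` or `2`, so `f n ≤ 2 n`. Cut the time axis into blocks `[9^s, 9^(s+1))`
and hand block `s` to the sequence `α e` with `e = (unpair s).1`, so each `e` owns infinitely
many blocks. Two consecutive positions cannot both start the digit pattern `01`, so on a block
owned by `e` the step can be chosen so that the digits of `α e` at `f k, f k + 1` are not `01`.
Then `frac (2^(f k) x) = 0.α(f k) α(f k + 1) …` lies in `[0, 1/4) ∪ [1/2, 1)`, missing
`[1/4, 3/8]`; at the end of such a block the orbit has visited this interval at most a `1/9`
fraction of the time, less than its length `1/8`.
-/

open Filter Finset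

section BinaryExpansion

variable (β : ℕ → Bool)

def zeroOnePositions : Set ℕ := {m | β m = false ∧ β (m + 1) = true}

lemma succ_notMem_zeroOnePositions {m : ℕ} (hm : m ∈ zeroOnePositions β) :
    m + 1 ∉ zeroOnePositions β := fun h => by simp_all [zeroOnePositions]

lemma summable_binVal_term :
    Summable (fun n => (if β n then (1 : ℝ) else 0) / 2 ^ (n + 1)) :=
  (summable_geometric_two' 1).of_nonneg_of_le (fun n => by positivity) fun n => by
    rw [div_div, ← pow_succ']
    split <;> simp

lemma binVal_nonneg_s10 : 0 ≤ binVal β :=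
  tsum_nonneg fun n => by positivity

lemma binVal_le_one_s10 : binVal β ≤ 1 := by
  calc binVal β ≤ ∑' n : ℕ, (1 : ℝ) / 2 / 2 ^ n := by
        refine (summable_binVal_term β).tsum_le_tsum (fun n => ?_) (summable_geometric_two' 1)
        rw [div_div, ← pow_succ']
        split <;> simp
    _ = 1 := tsum_geometric_two' 1

lemma binVal_eq_add_tail_div_two :
    binVal β = ((if β 0 then 1 else 0) + binVal (fun n => β (n + 1))) / 2 := by
  rw [binVal, (summable_binVal_term β).tsum_eq_zero_add, binVal, add_div, ← tsum_div_const]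
  congr 1
  · simp
  · simp only [pow_succ, div_div]

lemma binVal_lt_one {k : ℕ} (hk : β k = false) : binVal β < 1 := by
  induction k generalizing β with
  | zero =>
    rw [binVal_eq_add_tail_div_two, hk, if_neg Bool.false_ne_true]
    linarith [binVal_le_one_s10 fun n => β (n + 1)]
  | succ k ih =>
    rw [binVal_eq_add_tail_div_two]
    have := ih (fun n => β (n + 1)) hk
    split <;> linarith

lemma half_le_binVal (h0 : β 0 = true) : 1 / 2 ≤ binVal β := by
  rw [binVal_eq_add_tail_div_two, h0, if_pos rfl]
  linarith [binVal_nonneg_s10 fun n => β (n + 1)]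

lemma binVal_lt_quarter (h0 : β 0 = false) (h1 : β 1 = false) {k : ℕ}
    (hk : β (k + 2) = false) : binVal β < 1 / 4 := by
  rw [binVal_eq_add_tail_div_two, binVal_eq_add_tail_div_two, h0, h1, if_neg Bool.false_ne_true]
  linarith [binVal_lt_one (fun n => β (n + 1 + 1)) hk]

lemma exists_two_pow_mul_binVal_eq_intCast_add (m : ℕ) :
    ∃ z : ℤ, 2 ^ m * binVal β = z + binVal (fun n => β (n + m)) := by
  induction m generalizing β with
  | zero => exact ⟨0, by simp⟩
  | succ m ih =>
    obtain ⟨z, hz⟩ := ih fun n => β (n + 1)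
    refine ⟨2 ^ m * (if β 0 then 1 else 0) + z, ?_⟩
    rw [pow_succ, mul_assoc, binVal_eq_add_tail_div_two β, mul_div_cancel₀ _ two_ne_zero,
      mul_add, hz]
    push_cast
    exact (add_assoc _ _ _).symm

lemma fract_two_pow_mul_binVal {m k : ℕ} (hk : β (k + m) = false) :
    Int.fract (2 ^ m * binVal β) = binVal (fun n => β (n + m)) := by
  obtain ⟨z, hz⟩ := exists_two_pow_mul_binVal_eq_intCast_add β m
  rw [hz, Int.fract_intCast_add, Int.fract_eq_self]
  exact ⟨binVal_nonneg_s10 _, binVal_lt_one _ hk⟩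

lemma fract_two_pow_mul_binVal_notMem_Icc (hβ : ∀ m, ∃ k, m ≤ k ∧ β k = false) {m : ℕ}
    (h : m ∉ zeroOnePositions β) :
    Int.fract (2 ^ m * binVal β) ∉ Set.Icc (1 / 4 : ℝ) (3 / 8) := by
  obtain ⟨k, hmk, hk⟩ := hβ (m + 2)
  rw [fract_two_pow_mul_binVal β (k := k - m) (by rwa [Nat.sub_add_cancel (by omega)])]
  rintro ⟨hlow, hhigh⟩
  cases hm : β m with
  | true =>
    linarith [half_le_binVal (fun n => β (n + m)) (by simpa using hm)]
  | false =>
    have hm1 : β (m + 1) = false := by simpa [zeroOnePositions, hm] using h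
    have := binVal_lt_quarter (fun n => β (n + m)) (by simpa using hm)
      (by rwa [add_comm] at hm1) (k := k - m - 2) (by rwa [show k - m - 2 + 2 + m = k by omega])
    linarith

end BinaryExpansion

section AvoidingSequence

variable (B : ℕ → Set ℕ)

noncomputable def avoidSeq : ℕ → ℕ
  | 0 => 0
  | n + 1 => avoidSeq n + if avoidSeq n + 1 ∈ B (n + 1) then 2 else 1

lemma avoidSeq_lt_succ (n : ℕ) : avoidSeq B n < avoidSeq B (n + 1) := by
  simp only [avoidSeq]
  split <;> omega

lemma strictMono_avoidSeq : StrictMono (avoidSeq B) :=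
  strictMono_nat_of_lt_succ (avoidSeq_lt_succ B)

lemma avoidSeq_le_two_mul (n : ℕ) : avoidSeq B n ≤ 2 * n := by
  induction n with
  | zero => rfl
  | succ n ih =>
    simp only [avoidSeq]
    split <;> omega

lemma avoidSeq_succ_notMem (hB : ∀ n m, m ∈ B n → m + 1 ∉ B n) (n : ℕ) :
    avoidSeq B (n + 1) ∉ B (n + 1) := by
  simp only [avoidSeq]
  split_ifs with h
  · exact hB _ _ h
  · exact h

end AvoidingSequence

lemma prod_two_pow_sub {f : ℕ → ℕ} (hf : Monotone f) (h0 : f 0 = 0) (k : ℕ) :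
    ∏ i ∈ range k, ((2 ^ (f (i + 1) - f i) : ℕ) : ℝ) = 2 ^ f k := by
  push_cast
  rw [prod_pow_eq_pow_sum, sum_range_tsub hf, h0, Nat.sub_zero]

lemma qDistNormal_two_pow_sub_iff {f : ℕ → ℕ} (hf : Monotone f) (h0 : f 0 = 0) (x : ℝ) :
    QDistNormal (fun n => 2 ^ (f (n + 1) - f n)) x ↔ UnifDistMod1 (fun k => 2 ^ f k * x) := by
  simp only [QDistNormal, prod_two_pow_sub hf h0]

theorem not_unifDistMod1_of_frequently_gap {y : ℕ → ℝ} {a b : ℝ} (ha : 0 ≤ a) (hab : a ≤ b)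
    (hb : b ≤ 1) {c : ℕ} (hc : 1 < (b - a) * c)
    (hgap : ∃ᶠ s in atTop, ∀ k ∈ Ico (c ^ s) (c ^ (s + 1)), Int.fract (y k) ∉ Set.Icc a b) :
    ¬ UnifDistMod1 y := by
  intro hy
  have hc0 : (0 : ℝ) < c := by nlinarith
  have hc1 : 1 < c := by exact_mod_cast (show (1 : ℝ) < c by nlinarith)
  have hlt : (1 / c : ℝ) < b - a := by rwa [div_lt_iff₀ hc0]
  have hev := (hy a b ha hab hb).eventually (lt_mem_nhds hlt)
  have hpow : Tendsto (fun s => c ^ (s + 1)) atTop atTop :=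
    (tendsto_pow_atTop_atTop_of_one_lt hc1).comp (tendsto_add_atTop_nat 1)
  obtain ⟨s, hs, hratio⟩ := (hgap.and_eventually (hpow.eventually hev)).exists
  have hcard : #{k ∈ range (c ^ (s + 1)) | Int.fract (y k) ∈ Set.Icc a b} ≤ c ^ s := by
    refine (card_le_card fun k hk => ?_).trans (card_range _).le
    rw [mem_filter, mem_range] at hk
    rw [mem_range]
    by_contra hks
    exact hs k (mem_Ico.2 ⟨not_lt.1 hks, hk.1⟩) hk.2
  have hbound : (#{k ∈ range (c ^ (s + 1)) | Int.fract (y k) ∈ Set.Icc a b} : ℝ)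
      / (c ^ (s + 1) : ℕ) ≤ 1 / c := by
    rw [div_le_div_iff₀ (by positivity) hc0, one_mul, Nat.cast_pow, pow_succ (c : ℝ)]
    exact mul_le_mul_of_nonneg_right (by exact_mod_cast hcard) hc0.le
  exact (hbound.trans_lt hratio).false

def blockOwner (c k : ℕ) : ℕ := (Nat.unpair (Nat.log c k)).1

lemma blockOwner_eq {c e N k : ℕ}
    (hk : k ∈ Ico (c ^ Nat.pair e N) (c ^ (Nat.pair e N + 1))) : blockOwner c k = e := by
  rw [mem_Ico] at hk
  rw [blockOwner, Nat.log_eq_of_pow_le_of_lt_pow hk.1 hk.2, Nat.unpair_pair]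

theorem diagonalize_countable_family
    (α : ℕ → ℕ → Bool) (hα : ∀ e m, ∃ k, m ≤ k ∧ α e k = false) :
    ∃ f : ℕ → ℕ,
      StrictMono f ∧ f 0 = 0 ∧
      (∀ t : ℕ, f (3 ^ (t + 1) - 1) ≤ 2 * (3 ^ (t + 1) - 1)) ∧
      (∀ e : ℕ, ¬ QDistNormal (fun n => 2 ^ (f (n + 1) - f n)) (binVal (α e))) := by
  set B : ℕ → Set ℕ := fun k => zeroOnePositions (α (blockOwner 9 k))
  have hmono := strictMono_avoidSeq B
  refine ⟨avoidSeq B, hmono, rfl, fun t => avoidSeq_le_two_mul B _, fun e hQ => ?_⟩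
  rw [qDistNormal_two_pow_sub_iff hmono.monotone rfl] at hQ
  refine not_unifDistMod1_of_frequently_gap (a := 1 / 4) (b := 3 / 8) (c := 9) (by norm_num)
    (by norm_num) (by norm_num) (by norm_num) ?_ hQ
  refine frequently_atTop.2 fun N => ⟨Nat.pair e N, Nat.right_le_pair e N, fun k hk => ?_⟩
  obtain ⟨n, rfl⟩ : ∃ n, k = n + 1 :=
    Nat.exists_eq_add_one.2 (lt_of_lt_of_le (by positivity) (mem_Ico.1 hk).1)
  have hn := avoidSeq_succ_notMem B (fun _ _ => succ_notMem_zeroOnePositions _) n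
  simp only [B, blockOwner_eq hk] at hn
  exact fract_two_pow_mul_binVal_notMem_Icc (α e) (hα e) hn
end
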